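/- For a finite oriented graph Γ with odd Laplacian Δ⁻, the (i,j) entry of (Δ⁻)^k equals the signed count Σ_γ sgn(γ) over all edge super-walks γ of length k from edge e_i to edge e_j. -/

import Mathlib

/-!
Expanding the matrix power, `(Δ⁻ ^ k) e f` is a sum over edge sequences `e = a₀, …, a_k = f` of
`∏ Δ⁻ aₜ aₜ₊₁`, and `Δ⁻ a b = ∑ v, I v a * I v b` where only the common endpoints `v` of `a` and
`b` contribute. For such `v` the summand `I v a * I v b` is the sign of the step from `a` to `b`
through `v`; when `b = a` it is `(±1)² = 1`, the sign of a self-step. Distributing the product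
over the sums turns the choice of a shared endpoint at each step into the vertex component of a
super-walk.
-/

open Matrix

/-- The incidence matrix of an oriented graph given by source and target maps:
entry `(v, e)` is `1` if edge `e` ends at `v`, `-1` if `e` starts at `v`, `0` otherwise.
For an endpoint `v` of a loopless edge `e`, `incidence src tgt v e` is the sign of `v` in `e`. -/
def incidence {V E : Type*} [DecidableEq V] (src tgt : E → V) : Matrix V E ℤ :=
  fun v e => if tgt e = v then 1 else if src e = v then -1 else 0

/-- An edge super-walk of length `k` from `e` to `f`: a sequence of `k + 1` edges (the
first component) together with, at each step, a chosen endpoint of the current edge (the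
second component) which is also an endpoint of the next edge; a step either passes
through the chosen endpoint and returns to the same edge, or moves through the shared
chosen endpoint to a distinct edge. -/
abbrev EdgeSuperWalk {V E : Type*} (src tgt : E → V) (k : ℕ) (e f : E) : Type _ :=
  {p : (Fin (k + 1) → E) × (Fin k → V) //
    p.1 0 = e ∧ p.1 (Fin.last k) = f ∧
    ∀ t : Fin k,
      (src (p.1 t.castSucc) = p.2 t ∨ tgt (p.1 t.castSucc) = p.2 t) ∧
      (src (p.1 t.succ) = p.2 t ∨ tgt (p.1 t.succ) = p.2 t)}

/-- The sign of an edge super-walk: a self-step contributes `+1`, and a step moving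
through a shared vertex `v` from edge `a` to edge `b` contributes the product of the
sign of `v` in `a` and the sign of `v` in `b`. -/
def EdgeSuperWalk.sign {V E : Type*} [DecidableEq V] [DecidableEq E] {src tgt : E → V}
    {k : ℕ} {e f : E} (γ : EdgeSuperWalk src tgt k e f) : ℤ :=
  ∏ t : Fin k,
    if γ.1.1 t.succ = γ.1.1 t.castSucc then 1
    else incidence src tgt (γ.1.2 t) (γ.1.1 t.castSucc) *
      incidence src tgt (γ.1.2 t) (γ.1.1 t.succ)

open Finset

namespace Matrix
variable {n R : Type*} [Fintype n] [DecidableEq n] [CommSemiring R]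

theorem pow_apply_eq_sum_prod (M : Matrix n n R) (k : ℕ) (i j : n) :
    (M ^ k) i j = ∑ p : Fin (k + 1) → n,
      if p 0 = i ∧ p (Fin.last k) = j then ∏ t : Fin k, M (p t.castSucc) (p t.succ) else 0 := by
  induction k generalizing j with
  | zero =>
    rw [pow_zero, one_apply, ← (Equiv.funUnique (Fin 1) n).symm.sum_comp]
    simp [Fin.last, ite_and]
  | succ k ih =>
    -- Both sides become `∑ p, if p 0 = i then (∏ …) * M (p (Fin.last k)) j else 0`: on the
    -- left sum out the last vertex, on the right split a path of length `k + 1` as `Fin.snoc p x`.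
    rw [pow_succ, mul_apply, ← (Fin.snocEquiv fun _ => n).sum_comp, Fintype.sum_prod_type]
    simp_rw [ih, sum_mul, ite_mul, zero_mul]
    rw [sum_comm]
    simp only [Fin.snocEquiv, Equiv.coe_fn_mk, Fin.snoc_apply_zero, Fin.snoc_last,
      Fin.snoc_castSucc, Fin.prod_univ_castSucc, Fin.succ_castSucc, Fin.succ_last, ite_and,
      sum_ite_irrel, sum_ite_eq, mem_univ, if_true, sum_const_zero]
    rw [sum_comm]
    simp only [sum_ite_irrel, sum_ite_eq', mem_univ, if_true, sum_const_zero]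
end Matrix

section
variable {V E : Type*} [DecidableEq V] (src tgt : E → V)

def sharedEndpoints [Fintype V] (a b : E) : Finset V :=
  {v | (src a = v ∨ tgt a = v) ∧ (src b = v ∨ tgt b = v)}

theorem incidence_eq_zero {v : V} {e : E} (h : ¬(src e = v ∨ tgt e = v)) :
    incidence src tgt v e = 0 := by
  push Not at h
  simp [incidence, h.1, h.2]

theorem incidence_mul_self {v : V} {e : E} (h : src e = v ∨ tgt e = v) :
    incidence src tgt v e * incidence src tgt v e = 1 := by
  unfold incidence
  split_ifs <;> simp_all

theorem transpose_incidence_mul_incidence_apply [Fintype V] (a b : E) :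
    ((incidence src tgt)ᵀ * incidence src tgt) a b =
      ∑ v ∈ sharedEndpoints src tgt a b, incidence src tgt v a * incidence src tgt v b := by
  rw [mul_apply, sharedEndpoints, sum_filter_of_ne]
  · rfl
  intro v _ hv
  by_contra h
  rcases not_and_or.mp h with ha | hb
  · exact hv (by rw [incidence_eq_zero src tgt ha, zero_mul])
  · exact hv (by rw [incidence_eq_zero src tgt hb, mul_zero])

def stepSign [DecidableEq E] (a b : E) (v : V) : ℤ :=
  if b = a then 1 else incidence src tgt v a * incidence src tgt v b

theorem stepSign_eq_incidence_mul_incidence [DecidableEq E] {a b : E} {v : V}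
    (h : src a = v ∨ tgt a = v) :
    stepSign src tgt a b v = incidence src tgt v a * incidence src tgt v b := by
  rw [stepSign, ite_eq_right_iff]
  rintro rfl
  rw [incidence_mul_self src tgt h]

theorem EdgeSuperWalk.sign_eq_prod_stepSign [DecidableEq E] {k : ℕ} {e f : E}
    (γ : EdgeSuperWalk src tgt k e f) :
    γ.sign = ∏ t, stepSign src tgt (γ.1.1 t.castSucc) (γ.1.1 t.succ) (γ.1.2 t) := rfl

theorem sum_edgeSuperWalk_sign_eq_sum_prod [Fintype V] [Fintype E] [DecidableEq E]
    (k : ℕ) (e f : E) :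
    ∑ γ : EdgeSuperWalk src tgt k e f, γ.sign = ∑ p : Fin (k + 1) → E,
      if p 0 = e ∧ p (Fin.last k) = f then
        ∏ t : Fin k, ∑ v ∈ sharedEndpoints src tgt (p t.castSucc) (p t.succ),
          incidence src tgt v (p t.castSucc) * incidence src tgt v (p t.succ)
      else 0 := by
  simp only [EdgeSuperWalk.sign_eq_prod_stepSign]
  rw [← sum_subtype _ (fun _ => mem_filter_univ _)
      (fun x : (Fin (k + 1) → E) × (Fin k → V) =>
        ∏ t, stepSign src tgt (x.1 t.castSucc) (x.1 t.succ) (x.2 t)),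
    sum_filter, Fintype.sum_prod_type]
  refine Fintype.sum_congr _ _ fun p => ?_
  by_cases hp : p 0 = e ∧ p (Fin.last k) = f
  · simp only [hp, true_and, if_true]
    rw [← sum_filter, prod_univ_sum]
    refine sum_congr ?_ fun q hq => prod_congr rfl fun t _ => ?_
    · ext q
      simp [Fintype.mem_piFinset, sharedEndpoints]
    · exact stepSign_eq_incidence_mul_incidence src tgt
        ((mem_filter_univ _).mp (Fintype.mem_piFinset.mp hq t)).1
  · rw [if_neg hp]
    exact sum_eq_zero fun q _ => if_neg fun h => hp ⟨h.1, h.2.1⟩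
end

theorem oddLaplacian_pow_eq_signed_edgeSuperWalk_count_general {V E : Type*} [Fintype V]
    [Fintype E] [DecidableEq V] [DecidableEq E] (src tgt : E → V)
    (k : ℕ) (e f : E) :
    ((((incidence src tgt)ᵀ * incidence src tgt)) ^ k) e f =
      ∑ γ : EdgeSuperWalk src tgt k e f, γ.sign := by
  simp only [Matrix.pow_apply_eq_sum_prod, transpose_incidence_mul_incidence_apply,
    sum_edgeSuperWalk_sign_eq_sum_prod]

/-- the (i,j) entry of (Δ⁻)^k is the signed count of edge super-walks of
length k from edge e_i to edge e_j. -/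
theorem oddLaplacian_pow_eq_signed_edgeSuperWalk_count {V E : Type*} [Fintype V]
    [Fintype E] [DecidableEq V] [DecidableEq E] (src tgt : E → V)
    (hloop : ∀ e, src e ≠ tgt e)
    (hsimple : ∀ e f, ({src e, tgt e} : Finset V) = ({src f, tgt f} : Finset V) → e = f)
    (k : ℕ) (e f : E) :
    ((((incidence src tgt)ᵀ * incidence src tgt)) ^ k) e f =
      ∑ γ : EdgeSuperWalk src tgt k e f, γ.sign :=
  oddLaplacian_pow_eq_signed_edgeSuperWalk_count_general src tgt k e f
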